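/- For all integers k > ℓ ≥ 2 and every fixed ε > 0, if p = p(n) satisfies p ≤ (1−ε)·e^{k−ℓ}/n^{k−ℓ}, then the probability that H_{n,p}^{(k)} is ℓ-Hamiltonian tends to 0 as n → ∞ (along n divisible by k−ℓ). -/

import Mathlib

open MeasureTheory Finset Filter Topology

/-- The sample space of the random `k`-uniform hypergraph on vertex set `Fin n`:
a Boolean indicator for each `k`-element subset of the vertices. -/
abbrev HGraph (n k : ℕ) := {e : Finset (Fin n) // e.card = k} → Bool

/-- The distribution of `H_{n,p}^{(k)}`: the product over all `k`-subsets of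
independent Bernoulli(p) coordinates. -/
noncomputable def hyperMeasure (n k : ℕ) (p : ℝ) : Measure (HGraph n k) :=
  Measure.pi fun _ => (PMF.bernoulli (min 1 (Real.toNNReal p)) (min_le_left _ _)).toMeasure

/-- `e` is an edge of the hypergraph `ω`. -/
def isEdge {n k : ℕ} (ω : HGraph n k) (e : Finset (Fin n)) : Prop :=
  ∃ h : e.card = k, ω ⟨e, h⟩ = true

/-- The vertex of `Fin n` with index `a` modulo `n` (as a singleton finset, empty if `n = 0`). -/
def cvtx (n a : ℕ) : Finset (Fin n) :=
  if h : 0 < n then {⟨a % n, Nat.mod_lt a h⟩} else ∅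

/-- The `i`-th edge `E_π(i) = {π(i·g + j) : j < k}` (positions mod `n`) of the cycle induced by
the permutation `π`, where `g = k - ℓ`. -/
def cycEdge (n k g : ℕ) (π : Equiv.Perm (Fin n)) (i : ℕ) : Finset (Fin n) :=
  (Finset.range k).biUnion fun j => (cvtx n (i * g + j)).image π

/-- `π` is an `ℓ`-overlapping Hamilton cycle inducing permutation for `ω`. -/
def Hamperm (n k l : ℕ) (ω : HGraph n k) (π : Equiv.Perm (Fin n)) : Prop :=
  ∀ i < n / (k - l), isEdge ω (cycEdge n k (k - l) π i)

/-- `ω` contains an `ℓ`-overlapping Hamilton cycle. -/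
def IsEllHamiltonian (n k l : ℕ) (ω : HGraph n k) : Prop :=
  ∃ π : Equiv.Perm (Fin n), Hamperm n k l ω π

/-!
A union bound over the `n!` permutations of `[n]`. For `2k ≤ n` the `n/(k-ℓ)` edges of the
cycle induced by a permutation are distinct, so the cycle is present with probability
`p^{n/(k-ℓ)}`. Since `n! ≤ e·n·(n/e)^n` (Stirling), the expected number of hamperms is at most
`n! · ((1-ε) e^{k-ℓ}/n^{k-ℓ})^{n/(k-ℓ)} ≤ e·n·(1-ε)^{n/(k-ℓ)} → 0`.
-/

open scoped Nat

open Real in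
theorem factorial_le_exp_mul_self_mul_div_exp_pow {n : ℕ} (hn : n ≠ 0) :
    (n ! : ℝ) ≤ exp 1 * n * (n / exp 1) ^ n := by
  have hseq : Stirling.stirlingSeq n ≤ exp 1 / √2 := by
    obtain ⟨m, rfl⟩ := Nat.exists_eq_succ_of_ne_zero hn
    exact Stirling.stirlingSeq_one ▸ Stirling.stirlingSeq'_antitone (Nat.zero_le m)
  have hpos : 0 < √(2 * n : ℝ) * (n / exp 1) ^ n := by
    have : (0 : ℝ) < n := by exact_mod_cast Nat.pos_of_ne_zero hn
    positivity
  rw [Stirling.stirlingSeq, div_le_iff₀ hpos] at hseq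
  have hsqrt : √(n : ℝ) ≤ n :=
    Real.sqrt_le_self_iff.2 (Or.inr (by exact_mod_cast Nat.one_le_iff_ne_zero.2 hn))
  calc (n ! : ℝ) ≤ exp 1 / √2 * (√(2 * n : ℝ) * (n / exp 1) ^ n) := hseq
    _ = exp 1 * √(n : ℝ) * (n / exp 1) ^ n := by
        rw [Real.sqrt_mul zero_le_two]; field_simp
    _ ≤ exp 1 * n * (n / exp 1) ^ n := by gcongr

theorem eq_of_add_mod_eq_of_add_mod_eq {n a b j j' : ℕ} (ha : a < n)
    (hjj : j + j' < n) (h : (a + j) % n = b) (h' : (b + j') % n = a) : a = b := by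
  have hmod : ∀ {x y : ℕ}, x < 2 * n → x % n = y → y = x ∨ y + n = x := fun {x y} hx hxy => by
    rcases Nat.lt_or_ge x n with hlt | hge
    · rw [Nat.mod_eq_of_lt hlt] at hxy; omega
    · rw [Nat.mod_eq_sub_mod hge, Nat.mod_eq_of_lt (by omega)] at hxy; omega
  rcases hmod (by omega) h with h | h <;> rcases hmod (by omega) h' with h' | h' <;> omega

theorem hyperMeasure_setOf_forall_mem (n k : ℕ) (p : ℝ)
    (T : Finset {e : Finset (Fin n) // e.card = k}) :
    hyperMeasure n k p {ω | ∀ c ∈ T, ω c = true} =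
      (min 1 p.toNNReal : NNReal) ^ T.card := by
  have hpi : {ω : HGraph n k | ∀ c ∈ T, ω c = true} =
      Set.univ.pi fun c => if c ∈ T then {true} else Set.univ := by
    ext ω
    simp only [Set.mem_ofPred_eq, Set.mem_pi, Set.mem_univ, true_implies]
    refine forall_congr' fun c => ?_
    split_ifs <;> simp [*]
  rw [hpi, hyperMeasure, Measure.pi_pi]
  simp_rw [apply_ite (PMF.toMeasure _), measure_univ,
    PMF.toMeasure_apply_singleton _ _ (measurableSet_singleton _)]
  rw [prod_ite_mem, univ_inter, prod_const]
  rfl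

theorem mem_cycEdge {n k g : ℕ} (hn : 0 < n) {π : Equiv.Perm (Fin n)} {i : ℕ} {x : Fin n} :
    x ∈ cycEdge n k g π i ↔ ∃ j < k, π ⟨(i * g + j) % n, Nat.mod_lt _ hn⟩ = x := by
  simp [cycEdge, cvtx, hn, eq_comm]

theorem cycEdge_eq_image {n k g : ℕ} (hn : 0 < n) (π : Equiv.Perm (Fin n)) (i : ℕ) :
    cycEdge n k g π i = (range k).image fun j => π ⟨(i * g + j) % n, Nat.mod_lt _ hn⟩ := by
  ext x
  simp [mem_cycEdge hn]

theorem card_cycEdge {n k : ℕ} (g : ℕ) (hkn : k ≤ n) (hn : 0 < n) (π : Equiv.Perm (Fin n))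
    (i : ℕ) :
    (cycEdge n k g π i).card = k := by
  rw [cycEdge_eq_image hn, card_image_of_injOn, card_range]
  intro a ha b hb hab
  have hmod : (i * g + a) % n = (i * g + b) % n := congrArg Fin.val (π.injective hab)
  have := Nat.ModEq.add_left_cancel' _ hmod
  simp only [coe_range, Set.mem_Iio] at ha hb
  rwa [Nat.ModEq, Nat.mod_eq_of_lt (ha.trans_le hkn), Nat.mod_eq_of_lt (hb.trans_le hkn)]
    at this

theorem cycEdge_injOn {n k g : ℕ} (hg : 0 < g) (hk : 0 < k) (h2k : 2 * k ≤ n)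
    (π : Equiv.Perm (Fin n)) : Set.InjOn (cycEdge n k g π) (Set.Iio (n / g)) := by
  have hn : 0 < n := by omega
  have hstart : ∀ i < n / g, i * g < n := fun i hi =>
    calc i * g < (i + 1) * g := by nlinarith
      _ ≤ n / g * g := Nat.mul_le_mul_right g hi
      _ ≤ n := Nat.div_mul_le_self n g
  -- Equal edges contain each other's first vertex; as `2k ≤ n` this forces equal starting points.
  have hfirst : ∀ {i i'}, i < n / g → cycEdge n k g π i = cycEdge n k g π i' →
      ∃ j < k, (i' * g + j) % n = i * g := fun {i i'} hi h => by
    have : π ⟨(i * g + 0) % n, Nat.mod_lt _ hn⟩ ∈ cycEdge n k g π i' :=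
      h ▸ (mem_cycEdge hn).2 ⟨0, hk, rfl⟩
    obtain ⟨j, hj, hjx⟩ := (mem_cycEdge hn).1 this
    refine ⟨j, hj, ?_⟩
    simpa [Nat.mod_eq_of_lt (hstart i hi)] using congrArg Fin.val (π.injective hjx)
  intro i hi i' hi' h
  obtain ⟨j, hj, hji⟩ := hfirst hi h
  obtain ⟨j', hj', hji'⟩ := hfirst hi' h.symm
  exact Nat.eq_of_mul_eq_mul_right hg
    (eq_of_add_mod_eq_of_add_mod_eq (hstart i hi) (by omega) hji' hji)

theorem hyperMeasure_hamperm_le {n k l : ℕ} (hlk : l < k) (h2k : 2 * k ≤ n) (p : ℝ)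
    (π : Equiv.Perm (Fin n)) :
    hyperMeasure n k p {ω | Hamperm n k l ω π} ≤
      (min 1 p.toNNReal : NNReal) ^ (n / (k - l)) := by
  have hn : 0 < n := by omega
  let edge (i : ℕ) : {e : Finset (Fin n) // e.card = k} :=
    ⟨cycEdge n k (k - l) π i, card_cycEdge _ (by omega) hn π i⟩
  have hcard : ((range (n / (k - l))).image edge).card = n / (k - l) := by
    rw [card_image_of_injOn, card_range]
    intro i hi i' hi' h
    exact cycEdge_injOn (by omega) (by omega) h2k π (by simpa using hi) (by simpa using hi')
      (congrArg Subtype.val h)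
  calc hyperMeasure n k p {ω | Hamperm n k l ω π}
      ≤ hyperMeasure n k p {ω | ∀ c ∈ (range (n / (k - l))).image edge, ω c = true} := by
        refine measure_mono fun ω hω => ?_
        simp only [Set.mem_ofPred_eq, mem_image, mem_range, forall_exists_index, and_imp]
        rintro _ i hi rfl
        exact (hω i hi).2
    _ = (min 1 p.toNNReal : NNReal) ^ (n / (k - l)) := by
        rw [hyperMeasure_setOf_forall_mem, hcard]

theorem hyperMeasure_isEllHamiltonian_le {n k l : ℕ} (hlk : l < k) (h2k : 2 * k ≤ n) (p : ℝ) :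
    hyperMeasure n k p {ω | IsEllHamiltonian n k l ω}
      ≤ n ! * (min 1 p.toNNReal : NNReal) ^ (n / (k - l)) := by
  have hunion :
      {ω : HGraph n k | IsEllHamiltonian n k l ω} = ⋃ π, {ω | Hamperm n k l ω π} := by
    ext ω; simp [IsEllHamiltonian]
  calc hyperMeasure n k p {ω | IsEllHamiltonian n k l ω}
      ≤ ∑ π : Equiv.Perm (Fin n), hyperMeasure n k p {ω | Hamperm n k l ω π} :=
        hunion ▸ measure_iUnion_fintype_le _ _
    _ ≤ ∑ _π : Equiv.Perm (Fin n), ((min 1 p.toNNReal : NNReal) : ENNReal) ^ (n / (k - l)) :=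
        sum_le_sum fun π _ => hyperMeasure_hamperm_le hlk h2k p π
    _ = n ! * (min 1 p.toNNReal : NNReal) ^ (n / (k - l)) := by
        rw [sum_const, card_univ, Fintype.card_perm, Fintype.card_fin, nsmul_eq_mul]

open Real in
theorem factorial_mul_pow_le {n g : ℕ} (hn : n ≠ 0) (hg : g ∣ n) {r x : ℝ} (hx0 : 0 ≤ x)
    (hx : x ≤ r * exp 1 ^ g / n ^ g) :
    (n ! : ℝ) * x ^ (n / g) ≤ exp 1 * n * r ^ (n / g) := by
  have hn' : (n : ℝ) ≠ 0 := Nat.cast_ne_zero.2 hn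
  have hcancel : (n / exp 1) ^ n * (r * exp 1 ^ g / n ^ g) ^ (n / g) = r ^ (n / g) := by
    rw [div_pow, div_pow, mul_pow, ← pow_mul, ← pow_mul, Nat.mul_div_cancel' hg]
    field_simp
  calc (n ! : ℝ) * x ^ (n / g)
      ≤ exp 1 * n * (n / exp 1) ^ n * (r * exp 1 ^ g / n ^ g) ^ (n / g) := by
        gcongr
        exact factorial_le_exp_mul_self_mul_div_exp_pow hn
    _ = exp 1 * n * r ^ (n / g) := by rw [mul_assoc _ ((n / exp 1) ^ n), hcancel]

theorem tendsto_natCast_mul_pow_div {g : ℕ} (hg : g ≠ 0) {r : ℝ} (hr0 : 0 ≤ r) (hr1 : r < 1) :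
    Tendsto (fun n : ℕ => (n : ℝ) * r ^ (n / g)) (atTop ⊓ 𝓟 {n | g ∣ n}) (𝓝 0) := by
  have hlim :
      Tendsto (fun n : ℕ => (g : ℝ) * (((n / g : ℕ) : ℝ) * r ^ (n / g))) atTop (𝓝 0) := by
    simpa [Function.comp_def] using
      ((tendsto_self_mul_const_pow_of_lt_one hr0 hr1).const_mul (g : ℝ)).comp
        (Nat.tendsto_div_const_atTop hg)
  refine (hlim.mono_left inf_le_left).congr' ?_
  filter_upwards [mem_inf_of_right (mem_principal_self _)] with n hn
  rw [← mul_assoc, ← Nat.cast_mul, Nat.mul_div_cancel' hn]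

theorem statement_0_general (k l : ℕ) (hlk : l < k) (ε : ℝ) (hε : 0 < ε)
    (p : ℕ → ℝ)
    (hpu : ∀ n : ℕ, p n ≤ (1 - ε) * Real.exp 1 ^ (k - l) / (n : ℝ) ^ (k - l)) :
    Tendsto (fun n => hyperMeasure n k (p n) {ω | IsEllHamiltonian n k l ω})
      (atTop ⊓ 𝓟 {n | (k - l) ∣ n}) (𝓝 0) := by
  set r := max 0 (1 - ε)
  have hbound : ∀ᶠ n in atTop ⊓ 𝓟 {n | (k - l) ∣ n},
      hyperMeasure n k (p n) {ω | IsEllHamiltonian n k l ω}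
        ≤ ENNReal.ofReal (Real.exp 1 * (n * r ^ (n / (k - l)))) := by
    filter_upwards [mem_inf_of_left (eventually_ge_atTop (2 * k)),
      mem_inf_of_right (mem_principal_self _)] with n h2k hdvd
    have hpn : p n ≤ r * Real.exp 1 ^ (k - l) / n ^ (k - l) :=
      (hpu n).trans (by gcongr; exact le_max_right _ _)
    have hq : ((min 1 (p n).toNNReal : NNReal) : ℝ) ≤ r * Real.exp 1 ^ (k - l) / n ^ (k - l) :=
      calc ((min 1 (p n).toNNReal : NNReal) : ℝ) ≤ max (p n) 0 := by
            rcases le_total 0 (p n) with h | h <;> simp [h]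
        _ ≤ r * Real.exp 1 ^ (k - l) / n ^ (k - l) := max_le hpn (by positivity)
    calc hyperMeasure n k (p n) {ω | IsEllHamiltonian n k l ω}
        ≤ n ! * (min 1 (p n).toNNReal : NNReal) ^ (n / (k - l)) :=
          hyperMeasure_isEllHamiltonian_le hlk h2k (p n)
      _ = ENNReal.ofReal (n ! * ((min 1 (p n).toNNReal : NNReal) : ℝ) ^ (n / (k - l))) := by
          rw [ENNReal.ofReal_mul (by positivity), ENNReal.ofReal_pow (by positivity),
            ENNReal.ofReal_natCast, ENNReal.ofReal_coe_nnreal]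
      _ ≤ ENNReal.ofReal (Real.exp 1 * (n * r ^ (n / (k - l)))) := by
          rw [← mul_assoc]
          exact ENNReal.ofReal_le_ofReal
            (factorial_mul_pow_le (by omega) hdvd (NNReal.coe_nonneg _) hq)
  have hlim := ENNReal.tendsto_ofReal ((tendsto_natCast_mul_pow_div (by omega : k - l ≠ 0)
    (le_max_left 0 (1 - ε)) (max_lt one_pos (by linarith))).const_mul (Real.exp 1))
  rw [mul_zero, ENNReal.ofReal_zero] at hlim
  exact tendsto_of_tendsto_of_tendsto_of_le_of_le' tendsto_const_nhds hlim
    (Eventually.of_forall fun _ => bot_le) hbound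

/-- For all integers `k > ℓ ≥ 2` and fixed `ε > 0`, if
`p(n) ≤ (1-ε)·e^{k-ℓ}/n^{k-ℓ}`, then whp `H_{n,p}^{(k)}` is not `ℓ`-Hamiltonian
(along `n` divisible by `k - ℓ`). -/
theorem statement_0 (k l : ℕ) (hl : 2 ≤ l) (hlk : l < k) (ε : ℝ) (hε : 0 < ε)
    (p : ℕ → ℝ) (hp0 : ∀ n, 0 ≤ p n)
    (hpu : ∀ n : ℕ, p n ≤ (1 - ε) * Real.exp 1 ^ (k - l) / (n : ℝ) ^ (k - l)) :
    Tendsto (fun n => hyperMeasure n k (p n) {ω | IsEllHamiltonian n k l ω})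
      (atTop ⊓ 𝓟 {n | (k - l) ∣ n}) (𝓝 0) :=
  statement_0_general k l hlk ε hε p hpu
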